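/- arXiv:0711.4688 — 6 statements merged into one kernel-verified Lean document; each statement's English description precedes it below -/
import Mathlib

section
/- Let S be a commutative ring with derivation d, extended entrywise to M_n(S). Then for all L, L', L'' ∈ M_n(S), the cyclic sum tr([L,L']·d L'') + tr([L',L'']·d L) + tr([L'',L]·d L') equals d(tr(L·L'·L'') - tr(L·L''·L')). -/
/-- The cyclic sum `tr([L,L']·dL'') + tr([L',L'']·dL) + tr([L'',L]·dL')` is the
exact term `d(tr(LL'L'') - tr(LL''L'))`. -/
theorem stmt_6 {n : ℕ} {S : Type*} [CommRing S]
    (d : S → S)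
    (hadd : ∀ a b : S, d (a + b) = d a + d b)
    (hmul : ∀ a b : S, d (a * b) = d a * b + a * d b)
    (L L' L'' : Matrix (Fin n) (Fin n) S) :
    (⁅L, L'⁆ * L''.map d).trace + (⁅L', L''⁆ * L.map d).trace +
      (⁅L'', L⁆ * L'.map d).trace =
      d ((L * L' * L'').trace - (L * L'' * L').trace) := by
  set dh : S →+ S := AddMonoidHom.mk' d hadd with hdh
  have hds : ∀ a : S, d a = dh a := fun a => rfl
  have htr : ∀ M : Matrix (Fin n) (Fin n) S, d M.trace = (M.map d).trace := by
    intro M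
    rw [hds]
    simp [Matrix.trace, Matrix.diag, map_sum, Matrix.map_apply, hds]
  have hDmul : ∀ A B : Matrix (Fin n) (Fin n) S,
      (A * B).map d = A.map d * B + A * B.map d := by
    intro A B
    ext i j
    simp only [Matrix.map_apply, Matrix.mul_apply, Matrix.add_apply, hds, map_sum]
    rw [← Finset.sum_add_distrib]
    refine Finset.sum_congr rfl fun k _ => ?_
    rw [← hds, hmul, hds, hds]
  rw [hds, map_sub, ← hds, ← hds, htr, htr, hDmul, hDmul, hDmul, hDmul]
  simp only [Ring.lie_def, sub_mul, add_mul, Matrix.trace_sub, Matrix.trace_add,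
    Matrix.mul_assoc]
  rw [Matrix.trace_mul_cycle' L L' (L''.map d), Matrix.trace_mul_cycle' L' L (L''.map d),
      Matrix.trace_mul_cycle' L' L'' (L.map d), Matrix.trace_mul_cycle' L'' L' (L.map d),
      Matrix.trace_mul_cycle' L'' L (L'.map d), Matrix.trace_mul_cycle' L L'' (L'.map d),
      Matrix.trace_mul_cycle' L (L'.map d) L'', Matrix.trace_mul_cycle' (L'.map d) L'' L,
      Matrix.trace_mul_cycle' L (L''.map d) L', Matrix.trace_mul_cycle' (L''.map d) L' L]
  rw [Matrix.trace_mul_cycle' L (L''.map d) L', Matrix.trace_mul_cycle' L' L (L''.map d),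
      Matrix.trace_mul_cycle' L (L'.map d) L'', Matrix.trace_mul_cycle' L'' L (L'.map d)]
  ring
end

section
/- Let S be a commutative ring with derivation d, φ : S → ℂ a linear functional vanishing on the image of d, and ω ∈ M_n(S). Then γ(L,L') := φ(tr(L·(dL' + [ω,L']))) defines a 2-cocycle on the Lie algebra M_n(S): it is antisymmetric and satisfies the cyclic cocycle identity. -/
/-!
Put `β(A, B) = tr(A (dB + [ω, B])) ∈ S`, so that `γ = φ ∘ β`. The Leibniz rule and cyclicity
of the trace show that both defects of `β` are exact: `β(A, B) + β(B, A) = d tr(AB)`, and the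
cyclic sum of `β([A, B], C)` is `d tr(ABC) - d tr(BAC)`, the `ω`-terms cancelling because
invariance of the trace form turns them into `tr(ω · (Jacobi sum)) = 0`. Applying `φ` kills both.
-/

namespace Matrix

variable {ι l m n R S : Type*} [Fintype ι] [CommRing R] [CommRing S] [Algebra R S]

theorem map_derivation_mul [Fintype m] (D : Derivation R S S) (A : Matrix l m S)
    (B : Matrix m n S) : (A * B).map D = A.map D * B + A * B.map D := by
  ext i j
  simp only [map_apply, mul_apply, add_apply, map_sum, Derivation.leibniz, smul_eq_mul,
    ← Finset.sum_add_distrib]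
  exact Finset.sum_congr rfl fun k _ => by ring

theorem derivation_trace_mul (D : Derivation R S S) (A B : Matrix ι ι S) :
    D (A * B).trace = (A * B.map D).trace + (B * A.map D).trace := by
  rw [AddMonoidHom.map_trace D, map_derivation_mul D A B, trace_add, trace_mul_comm (A.map D),
    add_comm]

theorem derivation_trace_mul_mul (D : Derivation R S S) (A B C : Matrix ι ι S) :
    D (A * B * C).trace =
      (B * C * A.map D).trace + (C * A * B.map D).trace + (A * B * C.map D).trace := by
  rw [AddMonoidHom.map_trace D, map_derivation_mul D, map_derivation_mul D, add_mul,
    trace_add, trace_add, ← trace_mul_cycle B C, trace_mul_cycle A (B.map D)]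

theorem trace_lie_mul (A B C : Matrix ι ι S) : (⁅A, B⁆ * C).trace = (A * ⁅B, C⁆).trace := by
  simp only [Ring.lie_def, sub_mul, mul_sub, trace_sub, Matrix.mul_assoc]
  rw [trace_mul_comm B, Matrix.mul_assoc]

theorem trace_lie_mul_map_derivation_cyclic (D : Derivation R S S) (A B C : Matrix ι ι S) :
    (⁅A, B⁆ * C.map D).trace + (⁅B, C⁆ * A.map D).trace + (⁅C, A⁆ * B.map D).trace =
      D (A * B * C).trace - D (B * A * C).trace := by
  simp only [derivation_trace_mul_mul, Ring.lie_def, sub_mul, trace_sub]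
  ring

theorem trace_mul_lie_swap (ω A B : Matrix ι ι S) :
    (A * ⁅ω, B⁆).trace = -(B * ⁅ω, A⁆).trace := by
  rw [← trace_lie_mul, trace_mul_comm, Ring.lie_def, Ring.lie_def, ← neg_sub, mul_neg, trace_neg]

theorem trace_lie_mul_lie_cyclic [DecidableEq ι] (ω A B C : Matrix ι ι S) :
    (⁅A, B⁆ * ⁅ω, C⁆).trace + (⁅B, C⁆ * ⁅ω, A⁆).trace + (⁅C, A⁆ * ⁅ω, B⁆).trace = 0 := by
  simp only [trace_mul_comm ⁅_, _⁆ ⁅ω, _⁆, trace_lie_mul ω, ← trace_add, ← Matrix.mul_add]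
  -- the commutator Lie ring structure on matrices is not a global instance
  rw [@lie_jacobi _ LieRing.ofAssociativeRing]
  simp

def traceCocycle (D : Derivation R S S) (ω A B : Matrix ι ι S) : S :=
  (A * (B.map D + ⁅ω, B⁆)).trace

theorem traceCocycle_add_swap (D : Derivation R S S) (ω A B : Matrix ι ι S) :
    traceCocycle D ω A B + traceCocycle D ω B A = D (A * B).trace := by
  simp only [traceCocycle, Matrix.mul_add, trace_add, derivation_trace_mul D A B,
    trace_mul_lie_swap ω A B]
  ring

theorem traceCocycle_lie_cyclic [DecidableEq ι] (D : Derivation R S S)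
    (ω A B C : Matrix ι ι S) :
    traceCocycle D ω ⁅A, B⁆ C + traceCocycle D ω ⁅B, C⁆ A + traceCocycle D ω ⁅C, A⁆ B =
      D (A * B * C).trace - D (B * A * C).trace := by
  simp only [traceCocycle, Matrix.mul_add, trace_add]
  linear_combination
    trace_lie_mul_map_derivation_cyclic D A B C + trace_lie_mul_lie_cyclic ω A B C

end Matrix

/-- `γ(L,L') = φ(tr(L·(dL' + [ω,L'])))` is a 2-cocycle on the Lie algebra
`M_n(S)`: antisymmetric and satisfying the cyclic cocycle identity. -/
theorem stmt_8 {n : ℕ} {S : Type*} [CommRing S]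
    (d : S → S)
    (hadd : ∀ a b : S, d (a + b) = d a + d b)
    (hmul : ∀ a b : S, d (a * b) = d a * b + a * d b)
    (φ : S →+ ℂ) (hφ : ∀ s : S, φ (d s) = 0)
    (ω : Matrix (Fin n) (Fin n) S)
    (γ : Matrix (Fin n) (Fin n) S → Matrix (Fin n) (Fin n) S → ℂ)
    (hγ : ∀ L L', γ L L' = φ ((L * (L'.map d + ⁅ω, L'⁆)).trace)) :
    (∀ L L', γ L L' = -γ L' L) ∧
    (∀ L L' L'', γ ⁅L, L'⁆ L'' + γ ⁅L', L''⁆ L + γ ⁅L'', L⁆ L' = 0) := by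
  let D : Derivation ℤ S S := Derivation.mk' (AddMonoidHom.mk' d hadd).toIntLinearMap
    fun a b => by simp only [AddMonoidHom.coe_toIntLinearMap, AddMonoidHom.mk'_apply, hmul,
      smul_eq_mul]; ring
  have hγD : ∀ L L', γ L L' = φ (Matrix.traceCocycle D ω L L') := hγ
  have hφD : ∀ s, φ (D s) = 0 := hφ
  refine ⟨fun L L' => ?_, fun L L' L'' => ?_⟩
  · rw [hγD, hγD, eq_neg_iff_add_eq_zero, ← map_add, Matrix.traceCocycle_add_swap, hφD]
  · rw [hγD, hγD, hγD, ← map_add, ← map_add, Matrix.traceCocycle_lie_cyclic, map_sub, hφD, hφD,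
      sub_zero]
end

section
/- Let S be a commutative ring with derivation d and φ : S → ℂ linear with φ∘d = 0. Then γ₂(L,L') := φ(tr(L)·tr(dL')) defines a 2-cocycle on the Lie algebra M_n(S), and moreover γ₂([L,L'],L'') = 0 for all L, L', L''. In particular γ₂ vanishes identically on the subalgebra of traceless matrices sl_n(S). -/
/-- `γ₂(L,L') = φ(tr(L)·tr(dL'))` is a 2-cocycle on `M_n(S)`, it vanishes on
brackets in the first argument, and it vanishes on traceless matrices. -/
theorem stmt_9 {n : ℕ} {S : Type*} [CommRing S]
    (d : S → S)
    (hadd : ∀ a b : S, d (a + b) = d a + d b)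
    (hmul : ∀ a b : S, d (a * b) = d a * b + a * d b)
    (φ : S →+ ℂ) (hφ : ∀ s : S, φ (d s) = 0)
    (γ₂ : Matrix (Fin n) (Fin n) S → Matrix (Fin n) (Fin n) S → ℂ)
    (hγ : ∀ L L' : Matrix (Fin n) (Fin n) S,
      γ₂ L L' = φ (L.trace * (L'.map d).trace)) :
    (∀ L L' : Matrix (Fin n) (Fin n) S, γ₂ L L' = -γ₂ L' L) ∧
    (∀ L L' L'' : Matrix (Fin n) (Fin n) S,
      γ₂ ⁅L, L'⁆ L'' + γ₂ ⁅L', L''⁆ L + γ₂ ⁅L'', L⁆ L' = 0) ∧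
    (∀ L L' L'' : Matrix (Fin n) (Fin n) S, γ₂ ⁅L, L'⁆ L'' = 0) ∧
    (∀ L L' : Matrix (Fin n) (Fin n) S,
      L.trace = 0 → L'.trace = 0 → γ₂ L L' = 0) := by
  have hd0 : d 0 = 0 := by
    have := hadd 0 0
    simp at this
    linear_combination (norm := abel) this
  let D : S →+ S := AddMonoidHom.mk' d hadd
  have htr : ∀ L : Matrix (Fin n) (Fin n) S, (L.map d).trace = d L.trace := by
    intro L
    simp only [Matrix.trace, Matrix.diag, Matrix.map_apply]
    exact (map_sum D (fun i => L i i) Finset.univ).symm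
  have hbr : ∀ L L' : Matrix (Fin n) (Fin n) S, (⁅L, L'⁆ : Matrix (Fin n) (Fin n) S).trace = 0 := by
    intro L L'
    simp [Ring.lie_def, Matrix.trace_sub, Matrix.trace_mul_comm L L']
  have hbr0 : ∀ L L' L'' : Matrix (Fin n) (Fin n) S, γ₂ ⁅L, L'⁆ L'' = 0 := by
    intro L L' L''
    rw [hγ, hbr]
    simp
  refine ⟨?_, ?_, hbr0, ?_⟩
  · intro L L'
    have key : φ (d (L.trace * L'.trace)) = 0 := hφ _
    rw [hmul] at key
    rw [map_add] at key
    rw [hγ, hγ, htr, htr]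
    have h2 : φ (L.trace * d L'.trace) = - φ (d L.trace * L'.trace) := by
      linear_combination key
    rw [h2, mul_comm]
  · intro L L' L''
    rw [hbr0, hbr0, hbr0]; ring
  · intro L L' h h'
    rw [hγ, h]; simp
end

section
/- Let α, β, β̃ ∈ ℂⁿ and L₀, L₁, ω₀, ω₁ ∈ gl(n,ℂ) satisfy β̃ᵗα = 1, βᵗα = 0, L₀α = κα, ω₀α = κ̃α. Then (L₁ + [αβ̃ᵗ, L₁] + [ω₀, L₀] + [ω₁, αβᵗ])·α = (β̃ᵗL₁α - βᵗω₁α)·α, i.e. α is an eigenvector of the zero-order term of the covariant derivative. -/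
open Matrix

/-- gl(n) case, order 0 term: `α` is an eigenvector of
`L₁ + [αβ̃ᵗ,L₁] + [ω₀,L₀] + [ω₁,αβᵗ]` with eigenvalue `β̃ᵗL₁α - βᵗω₁α`. -/
theorem stmt_12 {n : ℕ} (a b bt : Matrix (Fin n) (Fin 1) ℂ)
    (L₀ L₁ ω₀ ω₁ : Matrix (Fin n) (Fin n) ℂ) (κ κt : ℂ)
    (h1 : btᵀ * a = 1) (h2 : bᵀ * a = 0)
    (h3 : L₀ * a = κ • a) (h4 : ω₀ * a = κt • a) :
    (L₁ + ⁅a * btᵀ, L₁⁆ + ⁅ω₀, L₀⁆ + ⁅ω₁, a * bᵀ⁆) * a =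
      ((btᵀ * L₁ * a) 0 0 - (bᵀ * ω₁ * a) 0 0) • a := by
  have key : ∀ (s : Matrix (Fin 1) (Fin 1) ℂ), a * s = s 0 0 • a := by
    intro s
    ext i j
    fin_cases j
    simp [mul_apply, Fin.sum_univ_one]
    ring
  have e1 : a * btᵀ * L₁ * a = (btᵀ * L₁ * a) 0 0 • a := by
    rw [Matrix.mul_assoc, Matrix.mul_assoc, key (btᵀ * (L₁ * a))]
    simp [Matrix.mul_assoc]
  have e2 : L₁ * (a * btᵀ) * a = L₁ * a := by
    rw [Matrix.mul_assoc, Matrix.mul_assoc, h1, Matrix.mul_one]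
  have e3 : ω₀ * L₀ * a = L₀ * (ω₀ * a) := by
    rw [Matrix.mul_assoc, h3, h4, Matrix.mul_smul, Matrix.mul_smul, h3, h4, smul_comm]
  have e4 : ω₁ * (a * bᵀ) * a = 0 := by
    rw [Matrix.mul_assoc, Matrix.mul_assoc, h2, Matrix.mul_zero, Matrix.mul_zero]
  have e5 : a * bᵀ * ω₁ * a = (bᵀ * ω₁ * a) 0 0 • a := by
    rw [Matrix.mul_assoc, Matrix.mul_assoc, key (bᵀ * (ω₁ * a))]
    simp [Matrix.mul_assoc]
  simp only [Ring.lie_def, Matrix.add_mul, Matrix.sub_mul, e1, e2, e3, e4, e5, Matrix.mul_assoc]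
  rw [key, key]
  rw [sub_smul]
  abel
end

section
/- Let σ be skew-symmetric invertible in M_{2n}(ℂ), α, β, β̃ ∈ ℂ^{2n} with β̃ᵗσα = 1 and βᵗσα = 0, and ν, κ̃ ∈ ℂ with ω₀α = κ̃α for ω₀ ∈ sp(2n) (i.e. ω₀ᵗσ + σω₀ = 0). Set ω₋₁ = (αβ̃ᵗ + β̃αᵗ)σ, L₋₂ = ν ααᵗσ, L₋₁ = (αβᵗ + βαᵗ)σ. Then -L₋₁ + [ω₋₁, L₋₁] + [ω₀, L₋₂] = 2(β̃ᵗσβ + νκ̃)·ααᵗσ, which is again of the required form ν'ααᵗσ. -/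
open Matrix

/-- sp(2n) case, order -2 term: with the stated conditions,
`-L₋₁ + [ω₋₁,L₋₁] + [ω₀,L₋₂] = 2(β̃ᵗσβ + νκ̃)·ααᵗσ`. -/
theorem stmt_15 {n : ℕ} (σ : Matrix (Fin (2 * n)) (Fin (2 * n)) ℂ)
    (hσ : σᵀ = -σ) (hinv : IsUnit σ)
    (a b bt : Matrix (Fin (2 * n)) (Fin 1) ℂ) (ν κt : ℂ)
    (ω₀ : Matrix (Fin (2 * n)) (Fin (2 * n)) ℂ)
    (hsp : ω₀ᵀ * σ + σ * ω₀ = 0)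
    (h1 : btᵀ * σ * a = 1) (h2 : bᵀ * σ * a = 0)
    (heig : ω₀ * a = κt • a) :
    -((a * bᵀ + b * aᵀ) * σ) + ⁅(a * btᵀ + bt * aᵀ) * σ, (a * bᵀ + b * aᵀ) * σ⁆ +
      ⁅ω₀, ν • (a * aᵀ * σ)⁆ =
      (2 * ((btᵀ * σ * b) 0 0 + ν * κt)) • (a * aᵀ * σ) := by
  have one1 : ∀ M : Matrix (Fin 1) (Fin 1) ℂ, Mᵀ = M := by
    intro M; ext i j; fin_cases i; fin_cases j; rfl
  have key : ∀ (x : Matrix (Fin (2*n)) (Fin 1) ℂ) (M : Matrix (Fin 1) (Fin 1) ℂ)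
      (y : Matrix (Fin 1) (Fin (2*n)) ℂ), x * M * y = M 0 0 • (x * y) := by
    intro x M y
    have hM : M = M 0 0 • (1 : Matrix (Fin 1) (Fin 1) ℂ) := by
      ext i j; fin_cases i; fin_cases j; simp
    conv_lhs => rw [hM]
    rw [Matrix.mul_smul, Matrix.smul_mul, Matrix.mul_one]
  have negself : ∀ X : Matrix (Fin 1) (Fin 1) ℂ, -X = X → X = 0 := by
    intro X h
    ext i j
    have := congrFun (congrFun h i) j
    simp only [Matrix.neg_apply, Matrix.zero_apply] at this ⊢
    linear_combination -this / 2
  have haa : aᵀ * σ * a = (0 : Matrix (Fin 1) (Fin 1) ℂ) := by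
    have h := one1 (aᵀ * σ * a)
    rw [transpose_mul, transpose_mul, transpose_transpose, hσ, ← Matrix.mul_assoc,
      Matrix.mul_neg, Matrix.neg_mul] at h
    exact negself _ h
  have hab : aᵀ * σ * b = (0 : Matrix (Fin 1) (Fin 1) ℂ) := by
    have h := one1 (bᵀ * σ * a)
    rw [transpose_mul, transpose_mul, transpose_transpose, hσ, h2, ← Matrix.mul_assoc,
      Matrix.mul_neg, Matrix.neg_mul, neg_eq_zero] at h
    exact h
  have habt : aᵀ * σ * bt = (-1 : Matrix (Fin 1) (Fin 1) ℂ) := by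
    have h := one1 (btᵀ * σ * a)
    rw [transpose_mul, transpose_mul, transpose_transpose, hσ, h1, ← Matrix.mul_assoc,
      Matrix.mul_neg, Matrix.neg_mul] at h
    exact neg_eq_iff_eq_neg.mp h
  have hbbt : bᵀ * σ * bt = -(btᵀ * σ * b) := by
    have h := one1 (btᵀ * σ * b)
    rw [transpose_mul, transpose_mul, transpose_transpose, hσ, ← Matrix.mul_assoc,
      Matrix.mul_neg, Matrix.neg_mul] at h
    exact neg_eq_iff_eq_neg.mp h
  have hw : aᵀ * σ * ω₀ = (-κt) • (aᵀ * σ) := by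
    have hso : σ * ω₀ = -(ω₀ᵀ * σ) := by
      have := hsp; linear_combination (norm := noncomm_ring) this
    calc aᵀ * σ * ω₀ = aᵀ * (σ * ω₀) := by rw [Matrix.mul_assoc]
      _ = aᵀ * (-(ω₀ᵀ * σ)) := by rw [hso]
      _ = -((ω₀ * a)ᵀ * σ) := by
          rw [Matrix.mul_neg, transpose_mul, Matrix.mul_assoc]
      _ = (-κt) • (aᵀ * σ) := by
          rw [heig, transpose_smul, Matrix.smul_mul]; simp
  set c : ℂ := (btᵀ * σ * b) 0 0 with hc
  set A : Matrix (Fin (2*n)) (Fin (2*n)) ℂ := a * aᵀ * σ with hA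
  have p11 : a * btᵀ * σ * (a * bᵀ * σ) = a * bᵀ * σ := by
    have e : a * btᵀ * σ * (a * bᵀ * σ) = a * (btᵀ * σ * a) * (bᵀ * σ) := by
      simp only [Matrix.mul_assoc]
    rw [e, h1, Matrix.mul_one, Matrix.mul_assoc]
  have p12 : a * btᵀ * σ * (b * aᵀ * σ) = c • A := by
    have e : a * btᵀ * σ * (b * aᵀ * σ) = a * (btᵀ * σ * b) * (aᵀ * σ) := by
      simp only [Matrix.mul_assoc]
    rw [e, key]
    simp [hc, hA, Matrix.mul_assoc]
  have p13 : bt * aᵀ * σ * (a * bᵀ * σ) = 0 := by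
    have e : bt * aᵀ * σ * (a * bᵀ * σ) = bt * (aᵀ * σ * a) * (bᵀ * σ) := by
      simp only [Matrix.mul_assoc]
    rw [e, haa]; simp
  have p14 : bt * aᵀ * σ * (b * aᵀ * σ) = 0 := by
    have e : bt * aᵀ * σ * (b * aᵀ * σ) = bt * (aᵀ * σ * b) * (aᵀ * σ) := by
      simp only [Matrix.mul_assoc]
    rw [e, hab]; simp
  have q11 : a * bᵀ * σ * (a * btᵀ * σ) = 0 := by
    have e : a * bᵀ * σ * (a * btᵀ * σ) = a * (bᵀ * σ * a) * (btᵀ * σ) := by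
      simp only [Matrix.mul_assoc]
    rw [e, h2]; simp
  have q12 : a * bᵀ * σ * (bt * aᵀ * σ) = (-c) • A := by
    have e : a * bᵀ * σ * (bt * aᵀ * σ) = a * (bᵀ * σ * bt) * (aᵀ * σ) := by
      simp only [Matrix.mul_assoc]
    rw [e, hbbt, Matrix.mul_neg, Matrix.neg_mul, key]
    simp [hc, hA, Matrix.mul_assoc]
  have q13 : b * aᵀ * σ * (a * btᵀ * σ) = 0 := by
    have e : b * aᵀ * σ * (a * btᵀ * σ) = b * (aᵀ * σ * a) * (btᵀ * σ) := by
      simp only [Matrix.mul_assoc]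
    rw [e, haa]; simp
  have q14 : b * aᵀ * σ * (bt * aᵀ * σ) = -(b * aᵀ * σ) := by
    have e : b * aᵀ * σ * (bt * aᵀ * σ) = b * (aᵀ * σ * bt) * (aᵀ * σ) := by
      simp only [Matrix.mul_assoc]
    rw [e, habt]; simp [Matrix.mul_assoc]
  have r1 : ω₀ * A = κt • A := by
    rw [hA]
    calc ω₀ * (a * aᵀ * σ) = (ω₀ * a) * (aᵀ * σ) := by simp only [Matrix.mul_assoc]
      _ = κt • (a * (aᵀ * σ)) := by rw [heig, Matrix.smul_mul]
      _ = κt • (a * aᵀ * σ) := by rw [Matrix.mul_assoc]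
  have r2 : A * ω₀ = (-κt) • A := by
    rw [hA]
    calc a * aᵀ * σ * ω₀ = a * (aᵀ * σ * ω₀) := by simp only [Matrix.mul_assoc]
      _ = a * ((-κt) • (aᵀ * σ)) := by rw [hw]
      _ = (-κt) • (a * aᵀ * σ) := by rw [Matrix.mul_smul, Matrix.mul_assoc]
  rw [Ring.lie_def, Ring.lie_def]
  simp only [Matrix.add_mul, Matrix.mul_add]
  rw [p11, p12, p13, p14, q11, q12, q13, q14, Matrix.mul_smul, Matrix.smul_mul, r1, r2]
  module
end

section
/- Let γ : ℤ × ℤ → ℂ be antisymmetric and satisfy γ(m,n+k) + γ(n,k+m) + γ(k,m+n) = 0 for all m,n,k ∈ ℤ. Then for every level l ≠ 0 and every n ∈ ℤ, γ(n, l-n) = 0. Consequently γ is supported on pairs of level zero and determined by the single value γ(1,-1). -/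
/-!
Adding the cyclic relation for `(a, b, l - a - b)` to antisymmetry shows that on each level `l`
the map `a ↦ γ(a, l - a)` is additive, hence `γ(a, l - a) = a • γ(1, l - 1)` over `ℤ`.
Taking `a = l` gives `l • γ(1, l - 1) = γ(l, 0) = -γ(0, l) = 0`, so for `l ≠ 0` the whole
level vanishes, while level zero is the multiples of `γ(1, -1)`.
-/

structure IsCyclicCocycle {A M : Type*} [AddCommGroup A] [AddCommGroup M] (γ : A → A → M) :
    Prop where
  antisymm : ∀ a b, γ a b = -γ b a
  cyclic : ∀ a b c, γ a (b + c) + γ b (c + a) + γ c (a + b) = 0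

namespace IsCyclicCocycle

section AddCommGroup

variable {A M : Type*} [AddCommGroup A] [AddCommGroup M] {γ : A → A → M}

theorem map_add_level (h : IsCyclicCocycle γ) (l a b : A) :
    γ (a + b) (l - (a + b)) = γ a (l - a) + γ b (l - b) := by
  have hcyc := h.cyclic a b (l - a - b)
  rw [h.antisymm (l - a - b)] at hcyc
  rw [show b + (l - a - b) = l - a by abel, show l - a - b + a = l - b by abel,
    show l - a - b = l - (a + b) by abel] at hcyc
  rw [← sub_eq_zero, ← neg_eq_zero, ← hcyc]
  abel

def levelHom (h : IsCyclicCocycle γ) (l : A) : A →+ M :=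
  AddMonoidHom.mk' (fun a ↦ γ a (l - a)) (h.map_add_level l)

@[simp]
theorem levelHom_apply (h : IsCyclicCocycle γ) (l a : A) : h.levelHom l a = γ a (l - a) := rfl

theorem apply_zero_left (h : IsCyclicCocycle γ) (b : A) : γ 0 b = 0 := by
  simpa using (h.levelHom b).map_zero

end AddCommGroup

section Int

variable {M : Type*} [AddCommGroup M] {γ : ℤ → ℤ → M}

theorem apply_sub_eq_zsmul (h : IsCyclicCocycle γ) (l n : ℤ) :
    γ n (l - n) = n • γ 1 (l - 1) := by
  simpa using map_zsmul (h.levelHom l) n 1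

theorem apply_sub_eq_zero [IsAddTorsionFree M] (h : IsCyclicCocycle γ) {l : ℤ} (hl : l ≠ 0)
    (n : ℤ) : γ n (l - n) = 0 := by
  have hl1 : l • γ 1 (l - 1) = 0 := by
    rw [← h.apply_sub_eq_zsmul, sub_self, h.antisymm, h.apply_zero_left, neg_zero]
  rw [h.apply_sub_eq_zsmul, (IsAddTorsionFree.zsmul_eq_zero_iff_right hl).mp hl1, smul_zero]

theorem apply_eq_zero_of_add_ne_zero [IsAddTorsionFree M] (h : IsCyclicCocycle γ) {n m : ℤ}
    (hnm : n + m ≠ 0) : γ n m = 0 := by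
  simpa using h.apply_sub_eq_zero hnm n

theorem apply_neg_eq_zsmul (h : IsCyclicCocycle γ) (n : ℤ) : γ n (-n) = n • γ 1 (-1) := by
  simpa using h.apply_sub_eq_zsmul 0 n

end Int

end IsCyclicCocycle

/-- For an antisymmetric `γ : ℤ × ℤ → ℂ` satisfying the cyclic recursion,
`γ` vanishes at every level `l ≠ 0`; consequently it is supported on level
zero and determined by the single value `γ(1,-1)`. -/
theorem stmt_18 (γ : ℤ → ℤ → ℂ)
    (hanti : ∀ n m : ℤ, γ n m = -γ m n)
    (hrec : ∀ m n k : ℤ, γ m (n + k) + γ n (k + m) + γ k (m + n) = 0) :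
    (∀ l n : ℤ, l ≠ 0 → γ n (l - n) = 0) ∧
    (∀ n m : ℤ, n + m ≠ 0 → γ n m = 0) ∧
    (∀ n : ℤ, γ n (-n) = (n : ℂ) * γ 1 (-1)) := by
  have h : IsCyclicCocycle γ := ⟨hanti, hrec⟩
  refine ⟨fun l n hl ↦ h.apply_sub_eq_zero hl n, fun n m ↦ h.apply_eq_zero_of_add_ne_zero,
    fun n ↦ ?_⟩
  rw [h.apply_neg_eq_zsmul, zsmul_eq_mul]
end
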